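/- (Lukács, odd case) Let a < b be real numbers and let q ∈ ℝ[y] be a univariate polynomial of odd degree d that is nonnegative on the interval [a,b]. Then there exist polynomials σ₀, σ₁ ∈ ℝ[y], each a sum of squares of polynomials, with deg σ₀ ≤ d − 1 and deg σ₁ ≤ d − 1, such that q(y) = σ₀(y)·(y − a) + σ₁(y)·(b − y) for all y ∈ ℝ. -/

import Mathlib

/-!
Strong induction on the degree. Subtracting its minimum `l ≥ 0` on `[a, b]` from `q` leaves a
polynomial vanishing at a point `z ∈ [a, b]`; it is divisible by `y - a` or `b - y` if `z` is an
endpoint, and by `(y - z)²` otherwise, since an interior minimum is a double root. The quotient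
is again nonnegative on `[a, b]`, of smaller degree.

For the induction to close, even degrees are represented as `σ + τ (y - a)(b - y)` and odd ones
as `σ₀ (y - a) + σ₁ (b - y)`: multiplying by `y - a` or `b - y` swaps the two shapes, because
`(y - a)(b - y) · (y - a) = (y - a)² (b - y)`, and a constant `l ≥ 0` has both shapes since
`(y - a) + (b - y) = b - a > 0`.
-/

open Polynomial Set

namespace Polynomial

section SumSqMul

variable {R : Type*} [CommSemiring R]

/-- The degree bound is on the product `σ * g`, so that multiplying by `f` raises it by
`f.natDegree` whatever `g` is. -/
def sumSqMulLE (g : R[X]) (n : ℕ) : AddSubmonoid R[X] where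
  carrier := {p | (∃ σ, IsSumSq σ ∧ σ * g = p) ∧ p.natDegree ≤ n}
  zero_mem' := ⟨⟨0, .zero, zero_mul g⟩, by simp⟩
  add_mem' := by
    rintro _ _ ⟨⟨σ, hσ, rfl⟩, hp⟩ ⟨⟨τ, hτ, rfl⟩, hq⟩
    exact ⟨⟨σ + τ, hσ.add hτ, add_mul σ τ g⟩, natDegree_add_le_of_degree_le hp hq⟩

variable {f g p : R[X]} {m n : ℕ}

theorem mul_mem_sumSqMulLE_mul (hf : f.natDegree ≤ m) (hp : p ∈ sumSqMulLE g n) :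
    f * p ∈ sumSqMulLE (f * g) (n + m) := by
  obtain ⟨⟨σ, hσ, rfl⟩, hdeg⟩ := hp
  exact ⟨⟨σ, hσ, by ring⟩, natDegree_mul_le.trans (by omega)⟩

theorem mul_mem_sumSqMulLE_of_mem_mul (hf : f.natDegree ≤ m) (hp : p ∈ sumSqMulLE (f * g) n) :
    f * p ∈ sumSqMulLE g (n + m) := by
  obtain ⟨⟨σ, hσ, rfl⟩, hdeg⟩ := hp
  exact ⟨⟨f * f * σ, (IsSumSq.mul_self f).mul hσ, by ring⟩, natDegree_mul_le.trans (by omega)⟩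

theorem isSumSq_C {c : R} (hc : IsSumSq c) : IsSumSq (C c) := by
  induction hc with
  | zero => simp
  | sq_add a _ ih => simpa using ih.sq_add (C a)

end SumSqMul

theorem natDegree_C_sub_X {R : Type*} [Ring R] [Nontrivial R] (b : R) :
    (C b - X).natDegree = 1 := by
  rw [← neg_sub, natDegree_neg, natDegree_X_sub_C]

theorem natDegree_le_pred_of_mul_le {R : Type*} [Semiring R] [NoZeroDivisors R] {σ g : R[X]}
    {n : ℕ} (hg : g.natDegree = 1) (h : (σ * g).natDegree ≤ n) : σ.natDegree ≤ n - 1 := by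
  rcases eq_or_ne σ 0 with rfl | hσ
  · simp
  rw [natDegree_mul hσ (ne_zero_of_natDegree_gt (hg ▸ Nat.zero_lt_one))] at h
  omega

section LukacsModule

variable {R : Type*} [CommSemiring R]

noncomputable def lukacsModule (u v : R[X]) (n : ℕ) : AddSubmonoid R[X] :=
  if Even n then sumSqMulLE 1 n ⊔ sumSqMulLE (u * v) n
  else sumSqMulLE u n ⊔ sumSqMulLE v n

variable {u v f q : R[X]} {n : ℕ}

theorem lukacsModule_of_even (hn : Even n) :
    lukacsModule u v n = sumSqMulLE 1 n ⊔ sumSqMulLE (u * v) n :=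
  if_pos hn

theorem lukacsModule_of_odd (hn : Odd n) :
    lukacsModule u v n = sumSqMulLE u n ⊔ sumSqMulLE v n :=
  if_neg (Nat.not_even_iff_odd.2 hn)

theorem lukacsModule_comm (u v : R[X]) (n : ℕ) : lukacsModule u v n = lukacsModule v u n := by
  unfold lukacsModule
  rw [mul_comm u v, sup_comm (sumSqMulLE u n)]

theorem mul_mem_lukacsModule_succ (hu : u.natDegree ≤ 1) (hq : q ∈ lukacsModule u v n) :
    u * q ∈ lukacsModule u v (n + 1) := by
  rcases Nat.even_or_odd n with hn | hn
  · rw [lukacsModule_of_even hn] at hq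
    rw [lukacsModule_of_odd hn.add_one]
    obtain ⟨p₀, hp₀, p₁, hp₁, rfl⟩ := AddSubmonoid.mem_sup.1 hq
    rw [mul_add]
    refine AddSubmonoid.add_mem_sup ?_ (mul_mem_sumSqMulLE_of_mem_mul hu hp₁)
    simpa using mul_mem_sumSqMulLE_mul hu hp₀
  · rw [lukacsModule_of_odd hn] at hq
    rw [lukacsModule_of_even hn.add_one]
    obtain ⟨p₀, hp₀, p₁, hp₁, rfl⟩ := AddSubmonoid.mem_sup.1 hq
    rw [mul_add]
    refine AddSubmonoid.add_mem_sup ?_ (mul_mem_sumSqMulLE_mul hu hp₁)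
    exact mul_mem_sumSqMulLE_of_mem_mul hu (by rwa [mul_one])

theorem mul_mul_self_mem_lukacsModule (hf : f.natDegree ≤ 1) (hq : q ∈ lukacsModule u v n) :
    f * (f * q) ∈ lukacsModule u v (n + 2) := by
  have lift : ∀ {g p : R[X]}, p ∈ sumSqMulLE g n → f * (f * p) ∈ sumSqMulLE g (n + 2) :=
    fun hp ↦ mul_mem_sumSqMulLE_of_mem_mul (m := 1) hf (mul_mem_sumSqMulLE_mul hf hp)
  have hpar : Even (n + 2) ↔ Even n := by simp [Nat.even_add]
  unfold lukacsModule at hq ⊢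
  rw [if_congr hpar rfl rfl]
  split_ifs at hq ⊢ <;>
  · obtain ⟨p₀, hp₀, p₁, hp₁, rfl⟩ := AddSubmonoid.mem_sup.1 hq
    rw [mul_add, mul_add]
    exact AddSubmonoid.add_mem_sup (lift hp₀) (lift hp₁)

end LukacsModule

theorem C_mem_lukacsModule {u v : ℝ[X]} {s c : ℝ} (hu : u.natDegree ≤ 1) (hv : v.natDegree ≤ 1)
    (huv : u + v = C s) (hs : 0 < s) (hc : 0 ≤ c) (n : ℕ) : C c ∈ lukacsModule u v n := by
  have hsq : ∀ {x : ℝ}, 0 ≤ x → IsSumSq (C x) :=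
    fun hx ↦ isSumSq_C (Real.mul_self_sqrt hx ▸ .mul_self _)
  rcases Nat.even_or_odd n with hn | hn
  · rw [lukacsModule_of_even hn]
    exact AddSubmonoid.mem_sup_left ⟨⟨C c, hsq hc, mul_one _⟩, by simp⟩
  · rw [lukacsModule_of_odd hn]
    have hw := hsq (div_nonneg hc hs.le)
    have hsplit : C c = C (c / s) * u + C (c / s) * v := by
      rw [← mul_add, huv, ← C_mul, div_mul_cancel₀ c hs.ne']
    rw [hsplit]
    exact AddSubmonoid.add_mem_sup
      ⟨⟨_, hw, rfl⟩, (natDegree_C_mul_le _ _).trans (hu.trans hn.pos)⟩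
      ⟨⟨_, hw, rfl⟩, (natDegree_C_mul_le _ _).trans (hv.trans hn.pos)⟩

theorem X_sub_C_sq_dvd_of_isLocalMin {p : ℝ[X]} {z : ℝ} (hmin : IsLocalMin (fun y ↦ p.eval y) z)
    (hroot : p.IsRoot z) : (X - C z) ^ 2 ∣ p := by
  rcases eq_or_ne p 0 with rfl | hp
  · exact dvd_zero _
  have hderiv : (derivative p).IsRoot z := by
    simpa [Polynomial.deriv] using hmin.deriv_eq_zero
  rw [← le_rootMultiplicity_iff hp]
  exact (one_lt_rootMultiplicity_iff_isRoot hp).2 ⟨hroot, hderiv⟩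

theorem eval_nonneg_of_mul_on_Icc {a b z : ℝ} (hab : a < b) {f p : ℝ[X]}
    (hf : ∀ y ∈ Icc a b, y ≠ z → 0 < f.eval y) (hfp : ∀ y ∈ Icc a b, 0 ≤ (f * p).eval y) :
    ∀ y ∈ Icc a b, 0 ≤ p.eval y := by
  have hdense : Icc a b ⊆ closure (Icc a b \ {z}) :=
    calc Icc a b = closure (Ioo a b) := (closure_Ioo hab.ne).symm
      _ ⊆ closure (Ioo a b ∩ {z}ᶜ) := closure_minimal
          ((dense_compl_singleton z).open_subset_closure_inter isOpen_Ioo) isClosed_closure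
      _ ⊆ closure (Icc a b \ {z}) := closure_mono (inter_subset_inter_left _ Ioo_subset_Icc_self)
  refine fun y hy ↦ closure_minimal (fun y hy ↦ ?_) (isClosed_le continuous_const p.continuous)
    (hdense hy)
  exact nonneg_of_mul_nonneg_right (by simpa using hfp y hy.1) (hf y hy.1 hy.2)

theorem mem_of_dvd_of_forall_lt {a b z : ℝ} (hab : a < b) {M : ℕ → Set ℝ[X]} {n m : ℕ}
    {f p : ℝ[X]}
    (ih : ∀ k < n, ∀ {q : ℝ[X]}, q.natDegree ≤ k → (∀ y ∈ Icc a b, 0 ≤ q.eval y) → q ∈ M k)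
    (hp : p.natDegree ≤ n) (hp0 : p ≠ 0) (hpnn : ∀ y ∈ Icc a b, 0 ≤ p.eval y) (hfp : f ∣ p)
    (hf : f.natDegree = m) (hm : 0 < m) (hfpos : ∀ y ∈ Icc a b, y ≠ z → 0 < f.eval y)
    (hlift : ∀ k q, q ∈ M k → f * q ∈ M (k + m)) : p ∈ M n := by
  obtain ⟨p₁, rfl⟩ := hfp
  have hdeg := natDegree_mul (left_ne_zero_of_mul hp0) (right_ne_zero_of_mul hp0)
  have hp₁ :=
    ih (n - m) (by omega) (q := p₁) (by omega) (eval_nonneg_of_mul_on_Icc hab hfpos hpnn)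
  simpa [show n - m + m = n by omega] using hlift _ _ hp₁

theorem mem_lukacsModule_of_nonneg {a b : ℝ} (hab : a < b) {n : ℕ} {q : ℝ[X]}
    (hq : q.natDegree ≤ n) (hnn : ∀ y ∈ Icc a b, 0 ≤ q.eval y) :
    q ∈ lukacsModule (X - C a) (C b - X) n := by
  induction n using Nat.strong_induction_on generalizing q with
  | _ n ih =>
  have hv := natDegree_C_sub_X (R := ℝ) b
  obtain ⟨z, hz, hmin⟩ :=
    isCompact_Icc.exists_isMinOn (nonempty_Icc.2 hab.le) q.continuous.continuousOn
  set p := q - C (q.eval z)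
  have hp : p.natDegree ≤ n := by rwa [natDegree_sub_C]
  have hpnn : ∀ y ∈ Icc a b, 0 ≤ p.eval y := fun y hy ↦ by simpa [p] using hmin hy
  have hroot : p.IsRoot z := by simp [p]
  have hqp : q = p + C (q.eval z) := by simp [p]
  rw [hqp]
  refine add_mem ?_ (C_mem_lukacsModule (natDegree_X_sub_C_le a) hv.le (by rw [C_sub]; ring)
    (sub_pos.2 hab) (hnn z hz) n)
  rcases eq_or_ne p 0 with hp0 | hp0
  · rw [hp0]
    exact zero_mem _
  rcases eq_endpoints_or_mem_Ioo_of_mem_Icc hz with hza | hzb | ⟨haz, hzb⟩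
  · subst z
    refine mem_of_dvd_of_forall_lt hab ih hp hp0 hpnn (dvd_iff_isRoot.2 hroot)
      (natDegree_X_sub_C a) one_pos (z := a) (fun y hy hne ↦ ?_)
      fun k q hq ↦ mul_mem_lukacsModule_succ (natDegree_X_sub_C_le a) hq
    simpa using lt_of_le_of_ne hy.1 (Ne.symm hne)
  · subst z
    refine mem_of_dvd_of_forall_lt hab ih hp hp0 hpnn ?_ hv one_pos (z := b)
      (fun y hy hne ↦ ?_) fun k q hq ↦ ?_
    · rw [← neg_sub]
      exact (dvd_iff_isRoot.2 hroot).neg_left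
    · simpa using lt_of_le_of_ne hy.2 hne
    · rw [lukacsModule_comm] at hq ⊢
      exact mul_mem_lukacsModule_succ hv.le hq
  have hlocal : IsLocalMin (fun y ↦ p.eval y) z :=
    (isMinOn_iff.2 fun y hy ↦ by rw [hroot.eq_zero]; exact hpnn y hy).isLocalMin
      (Icc_mem_nhds haz hzb)
  refine mem_of_dvd_of_forall_lt hab ih hp hp0 hpnn (X_sub_C_sq_dvd_of_isLocalMin hlocal hroot)
    (by rw [natDegree_pow, natDegree_X_sub_C, mul_one]) two_pos (z := z) (fun y _ hne ↦ ?_)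
    fun k q hq ↦ ?_
  · simpa using pow_two_pos_of_ne_zero (sub_ne_zero.2 hne)
  · rw [sq, mul_assoc]
    exact mul_mul_self_mem_lukacsModule (natDegree_X_sub_C_le z) hq

end Polynomial

/-- Lukács, odd case: if `q ∈ ℝ[y]` has odd degree `d` and is
nonnegative on `[a,b]` (`a < b`), then `q = σ₀·(y − a) + σ₁·(b − y)` with `σ₀, σ₁`
sums of squares, `deg σ₀ ≤ d − 1`, `deg σ₁ ≤ d − 1`. -/
theorem lukacs_odd (a b : ℝ) (hab : a < b) (d : ℕ) (hd : Odd d)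
    (q : Polynomial ℝ) (hdeg : q.natDegree = d)
    (hnonneg : ∀ y ∈ Set.Icc a b, 0 ≤ q.eval y) :
    ∃ σ₀ σ₁ : Polynomial ℝ, IsSumSq σ₀ ∧ IsSumSq σ₁ ∧
      σ₀.natDegree ≤ d - 1 ∧ σ₁.natDegree ≤ d - 1 ∧
      ∀ y : ℝ, q.eval y = σ₀.eval y * (y - a) + σ₁.eval y * (b - y) := by
  have hq := mem_lukacsModule_of_nonneg hab hdeg.le hnonneg
  rw [lukacsModule_of_odd hd] at hq
  obtain ⟨_, ⟨⟨σ₀, hσ₀, rfl⟩, h₀⟩, _, ⟨⟨σ₁, hσ₁, rfl⟩, h₁⟩, rfl⟩ := AddSubmonoid.mem_sup.1 hq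
  exact ⟨σ₀, σ₁, hσ₀, hσ₁, natDegree_le_pred_of_mul_le (natDegree_X_sub_C a) h₀,
    natDegree_le_pred_of_mul_le (natDegree_C_sub_X b) h₁, fun y ↦ by simp⟩
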